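/- Let n ≥ 2, k ≥ 1 and let G = ({1,…,n}, E) be a simple directed graph without loops (E ⊆ {1,…,n}² irreflexive). Then the family of open squares S'(G,k) can be stabbed by 6k axis-parallel lines if and only if G has a k-clique, i.e., a set C ⊆ {1,…,n} of k distinct vertices such that (u, v) ∈ E for all u, v ∈ C with u ≠ v. -/

import Mathlib

/-- The vertical line `x = c`. -/
def vLine (c : ℝ) : Set (ℝ × ℝ) := {p : ℝ × ℝ | p.1 = c}

/-- The horizontal line `y = c`. -/
def hLine (c : ℝ) : Set (ℝ × ℝ) := {p : ℝ × ℝ | p.2 = c}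

/-- An axis-parallel line is a vertical or a horizontal line. -/
def IsAPLine (L : Set (ℝ × ℝ)) : Prop := (∃ c, L = vLine c) ∨ (∃ c, L = hLine c)

/-- The open axis-parallel square `□_l(x, y) = (x, x+l) × (y, y+l)`. -/
def openSquare (l x y : ℝ) : Set (ℝ × ℝ) := Set.Ioo x (x + l) ×ˢ Set.Ioo y (y + l)

/-- Translating a set of points in the plane by a vector `v`. -/
def translateSet (v : ℝ × ℝ) (s : Set (ℝ × ℝ)) : Set (ℝ × ℝ) :=
  (fun p => (p.1 + v.1, p.2 + v.2)) '' s

/-- Translating a family of plane sets by a vector `v`. -/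
def translateFam (v : ℝ × ℝ) (F : Set (Set (ℝ × ℝ))) : Set (Set (ℝ × ℝ)) :=
  translateSet v '' F

/-- The horizontal forcing gadget `F_h`. -/
def FhGadget (n k : ℕ) : Set (Set (ℝ × ℝ)) :=
  {s | ∃ i : ℕ, 1 ≤ i ∧ i ≤ 6 * k + 1 ∧ s = openSquare (n : ℝ) (-((i : ℝ) * n)) 0}

/-- The vertical forcing gadget `F_v`. -/
def FvGadget (n k : ℕ) : Set (Set (ℝ × ℝ)) :=
  {s | ∃ i : ℕ, 1 ≤ i ∧ i ≤ 6 * k + 1 ∧ s = openSquare (n : ℝ) 0 (-((i : ℝ) * n))}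

/-- The adjacency gadget `A = {□_{n−1}(i, j) : (i, j) ∈ {1,…,n}², (i, j) ∉ E}`. -/
def AGadget (n : ℕ) (E : Set (ℕ × ℕ)) : Set (Set (ℝ × ℝ)) :=
  {s | ∃ i j : ℕ, 1 ≤ i ∧ i ≤ n ∧ 1 ≤ j ∧ j ≤ n ∧ (i, j) ∉ E ∧
      s = openSquare ((n : ℝ) - 1) (i : ℝ) (j : ℝ)}

/-- The diagonal gadget `D = {□_{n−1}(i, j) : 1 ≤ i ≠ j ≤ n}`. -/
def DGadget (n : ℕ) : Set (Set (ℝ × ℝ)) :=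
  {s | ∃ i j : ℕ, 1 ≤ i ∧ i ≤ n ∧ 1 ≤ j ∧ j ≤ n ∧ i ≠ j ∧
      s = openSquare ((n : ℝ) - 1) (i : ℝ) (j : ℝ)}

/-- The horizontal consistency gadget `C_h`. -/
def ChGadget (n : ℕ) : Set (Set (ℝ × ℝ)) :=
  {s | ∃ i : ℕ, 1 ≤ i ∧ i ≤ n - 1 ∧
      s = openSquare ((n : ℝ) - 1) (i : ℝ) ((i : ℝ) - n + 1)} ∪
  {s | ∃ i : ℕ, 2 ≤ i ∧ i ≤ n ∧
      s = openSquare ((n : ℝ) - 1) ((i : ℝ) - n) ((n : ℝ) + i - 1)}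

/-- The vertical consistency gadget `C_v`. -/
def CvGadget (n : ℕ) : Set (Set (ℝ × ℝ)) :=
  {s | ∃ i : ℕ, 1 ≤ i ∧ i ≤ n - 1 ∧
      s = openSquare ((n : ℝ) - 1) ((i : ℝ) - n + 1) (i : ℝ)} ∪
  {s | ∃ i : ℕ, 2 ≤ i ∧ i ≤ n ∧
      s = openSquare ((n : ℝ) - 1) ((n : ℝ) + i - 1) ((i : ℝ) - n)}

/-- The full construction `S'(G, k)`. -/
def SPrime (n k : ℕ) (E : Set (ℕ × ℕ)) : Set (Set (ℝ × ℝ)) :=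
  (⋃ i ∈ Set.Icc 1 k, ⋃ j ∈ Set.Icc 1 k,
    if i = j then (∅ : Set (Set (ℝ × ℝ)))
    else translateFam (3 * (n : ℝ) * i, 3 * (n : ℝ) * j) (AGadget n E)) ∪
  (⋃ i ∈ Set.Icc 1 k, translateFam (3 * (n : ℝ) * i, 3 * (n : ℝ) * i) (DGadget n)) ∪
  (⋃ i ∈ Set.Icc 1 k, translateFam (-(3 * (n : ℝ) * i), 3 * (n : ℝ) * i) (ChGadget n)) ∪
  (⋃ i ∈ Set.Icc 1 k, translateFam (3 * (n : ℝ) * i, -(3 * (n : ℝ) * i)) (CvGadget n)) ∪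
  (⋃ i ∈ Set.Icc 1 k,
    translateFam (-(3 * (n : ℝ) * (k + 1)), 3 * (n : ℝ) * i) (FhGadget n k)) ∪
  (⋃ i ∈ Set.Icc 1 k,
    translateFam (-(3 * (n : ℝ) * (k + 1)), 3 * (n : ℝ) * i + n) (FhGadget n k)) ∪
  (⋃ i ∈ Set.Icc 1 k,
    translateFam (3 * (n : ℝ) * i, -(3 * (n : ℝ) * (k + 1))) (FvGadget n k)) ∪
  (⋃ i ∈ Set.Icc 1 k,
    translateFam (3 * (n : ℝ) * i + n, -(3 * (n : ℝ) * (k + 1))) (FvGadget n k)) ∪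
  (⋃ i ∈ Set.Icc 1 k,
    translateFam (-(3 * (n : ℝ) * i), -(3 * (n : ℝ) * (k + 1))) (FvGadget n k)) ∪
  (⋃ i ∈ Set.Icc 1 k,
    translateFam (-(3 * (n : ℝ) * (k + 1)), -(3 * (n : ℝ) * i)) (FhGadget n k))

/-!
Put the strips `(q n, q n + n)` at `q = 3i, 3i + 1, -3i` for the blocks `i = 1, …, k`. A forcing
gadget is a stack of `6k + 1` squares over one strip, so `6k` lines can stab it only with a line
through that strip; since the `6k` strips (`3k` vertical, `3k` horizontal) are disjoint, the lines
are exactly one line per strip, say at `q n + α q` (vertical) and `q n + β q` (horizontal).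
The two vertical lines of block `i` miss the `D`/`A` squares of column `u` exactly when
`α (3i) ≤ u ≤ α (3i + 1) + 1`. The `C_v` gadget forces `u = ⌈β (-3i)⌉` to be such a column, the
`C_h` gadget does the same for rows, the `D` gadget makes row and column equal, and the `A` gadgets
make the vertices chosen by distinct blocks adjacent. Conversely, a clique `w₁, …, w_k` yields the
lines at offset `w_i - 1/2` in every strip of block `i`.
-/

open Set

lemma vLine_injective : Function.Injective vLine := fun c c' h =>
  show (c, (0 : ℝ)) ∈ vLine c' from h ▸ rfl

lemma hLine_injective : Function.Injective hLine := fun c c' h =>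
  show ((0 : ℝ), c) ∈ hLine c' from h ▸ rfl

lemma vLine_ne_hLine (c c' : ℝ) : vLine c ≠ hLine c' := by
  intro h
  have : (c, c' + 1) ∈ hLine c' := h ▸ rfl
  exact absurd this (by simp [hLine])

lemma vLine_inter_openSquare_nonempty_iff {c l x y : ℝ} (hl : 0 < l) :
    (vLine c ∩ openSquare l x y).Nonempty ↔ c ∈ Ioo x (x + l) := by
  constructor
  · rintro ⟨p, rfl, hx, -⟩
    exact hx
  · intro hc
    exact ⟨(c, y + l / 2), rfl, hc, by constructor <;> linarith⟩

lemma hLine_inter_openSquare_nonempty_iff {c l x y : ℝ} (hl : 0 < l) :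
    (hLine c ∩ openSquare l x y).Nonempty ↔ c ∈ Ioo y (y + l) := by
  constructor
  · rintro ⟨p, rfl, -, hy⟩
    exact hy
  · intro hc
    exact ⟨(x + l / 2, c), rfl, by constructor <;> linarith, hc⟩

lemma translateSet_openSquare (a b l x y : ℝ) :
    translateSet (a, b) (openSquare l x y) = openSquare l (x + a) (y + b) := by
  ext ⟨px, py⟩
  simp only [translateSet, openSquare, mem_image, mem_prod, mem_Ioo, Prod.mk.injEq, Prod.exists]
  constructor
  · rintro ⟨x', y', ⟨⟨h₁, h₂⟩, h₃, h₄⟩, rfl, rfl⟩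
    constructor <;> constructor <;> linarith
  · rintro ⟨⟨h₁, h₂⟩, h₃, h₄⟩
    exact ⟨px - a, py - b, ⟨⟨by linarith, by linarith⟩, by linarith, by linarith⟩, by ring, by ring⟩

def Stabs (L : Finset (Set (ℝ × ℝ))) (F : Set (Set (ℝ × ℝ))) : Prop :=
  ∀ s ∈ F, ∃ ℓ ∈ L, (ℓ ∩ s).Nonempty

lemma Finset.card_le_card_of_forall_inter_nonempty {ι α : Type*} {s : Finset ι}
    {L : Finset (Set α)} {R : ι → Set α} (hmeet : ∀ j ∈ s, ∃ ℓ ∈ L, (ℓ ∩ R j).Nonempty)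
    (hsep : ∀ ℓ ∈ L, ∀ i ∈ s, ∀ j ∈ s, (ℓ ∩ R i).Nonempty → (ℓ ∩ R j).Nonempty → i = j) :
    s.card ≤ L.card := by
  choose! f hfL hf using hmeet
  exact Finset.card_le_card_of_injOn f hfL fun i hi j hj hij =>
    hsep _ (hfL i hi) i hi j hj (hf i hi) (hij ▸ hf j hj)

lemma Nat.eq_of_mem_Ioo_sub_mul {l c Y : ℝ} (hl : 0 < l) {i j : ℕ}
    (hi : c ∈ Ioo (Y - i * l) (Y - i * l + l)) (hj : c ∈ Ioo (Y - j * l) (Y - j * l + l)) :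
    i = j := by
  have h₁ : (i : ℝ) < j + 1 := lt_of_mul_lt_mul_right (by linarith [hi.2, hj.1]) hl.le
  have h₂ : (j : ℝ) < i + 1 := lt_of_mul_lt_mul_right (by linarith [hi.1, hj.2]) hl.le
  have : i < j + 1 := by exact_mod_cast h₁
  have : j < i + 1 := by exact_mod_cast h₂
  omega

/-- Each horizontal line meets at most one square of the stack. -/
lemma exists_vLine_mem_of_stabs_column {L : Finset (Set (ℝ × ℝ))} (hL : ∀ ℓ ∈ L, IsAPLine ℓ)
    {m : ℕ} (hcard : L.card ≤ m) {l X Y : ℝ} (hl : 0 < l)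
    (hstab : ∀ j ∈ Finset.Icc 1 (m + 1), ∃ ℓ ∈ L, (ℓ ∩ openSquare l X (Y - j * l)).Nonempty) :
    ∃ a ∈ Ioo 0 l, vLine (X + a) ∈ L := by
  by_contra! hno
  have := Finset.card_le_card_of_forall_inter_nonempty hstab ?_
  · simp only [Nat.card_Icc] at this
    omega
  rintro ℓ hℓ i - j - hi hj
  rcases hL ℓ hℓ with ⟨c, rfl⟩ | ⟨c, rfl⟩
  · rw [vLine_inter_openSquare_nonempty_iff hl] at hi
    refine absurd (by simpa using hℓ) (hno (c - X) ⟨?_, ?_⟩) <;> linarith [hi.1, hi.2]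
  · rw [hLine_inter_openSquare_nonempty_iff hl] at hi hj
    exact Nat.eq_of_mem_Ioo_sub_mul hl hi hj

lemma exists_hLine_mem_of_stabs_row {L : Finset (Set (ℝ × ℝ))} (hL : ∀ ℓ ∈ L, IsAPLine ℓ)
    {m : ℕ} (hcard : L.card ≤ m) {l X Y : ℝ} (hl : 0 < l)
    (hstab : ∀ j ∈ Finset.Icc 1 (m + 1), ∃ ℓ ∈ L, (ℓ ∩ openSquare l (X - j * l) Y).Nonempty) :
    ∃ a ∈ Ioo 0 l, hLine (Y + a) ∈ L := by
  by_contra! hno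
  have := Finset.card_le_card_of_forall_inter_nonempty hstab ?_
  · simp only [Nat.card_Icc] at this
    omega
  rintro ℓ hℓ i - j - hi hj
  rcases hL ℓ hℓ with ⟨c, rfl⟩ | ⟨c, rfl⟩
  · rw [vLine_inter_openSquare_nonempty_iff hl] at hi hj
    exact Nat.eq_of_mem_Ioo_sub_mul hl hi hj
  · rw [hLine_inter_openSquare_nonempty_iff hl] at hi
    refine absurd (by simpa using hℓ) (hno (c - Y) ⟨?_, ?_⟩) <;> linarith [hi.1, hi.2]

/-- Strip `q` is the open interval `(q N, q N + N)`; block `i` of `S'(G, k)` owns the strips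
`q = 3i, 3i + 1, -3i`, which are where its forcing gadgets sit. -/
def stripIdx (k : ℕ) : Finset ℤ :=
  (Finset.Icc 1 k).biUnion fun i : ℕ => ({3 * (i : ℤ), 3 * (i : ℤ) + 1, -(3 * (i : ℤ))} : Finset ℤ)

lemma mem_stripIdx {k : ℕ} {q : ℤ} :
    q ∈ stripIdx k ↔ ∃ i ∈ Icc 1 k, q = 3 * (i : ℤ) ∨ q = 3 * (i : ℤ) + 1 ∨ q = -(3 * (i : ℤ)) := by
  simp [stripIdx]

lemma card_stripIdx (k : ℕ) : (stripIdx k).card = 3 * k := by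
  rw [stripIdx, Finset.card_biUnion, Finset.sum_congr rfl (g := fun _ => 3), Finset.sum_const,
    Nat.card_Icc, smul_eq_mul, add_tsub_cancel_right, mul_comm]
  · intro i hi
    rw [Finset.mem_Icc] at hi
    exact Finset.card_eq_three.2 ⟨_, _, _, by omega, by omega, by omega, rfl⟩
  · intro i hi j hj hij
    simp only [Function.onFun, Finset.disjoint_left, Finset.mem_insert, Finset.mem_singleton,
      Finset.coe_Icc, mem_Icc] at hi hj ⊢
    omega

open scoped Classical in
noncomputable def stripLines (N : ℝ) (k : ℕ) (α β : ℤ → ℝ) : Finset (Set (ℝ × ℝ)) :=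
  (stripIdx k).image (fun q => vLine (q * N + α q)) ∪
    (stripIdx k).image (fun q => hLine (q * N + β q))

def StripMeets (N : ℝ) (k : ℕ) (α : ℤ → ℝ) (a b : ℝ) : Prop :=
  ∃ q ∈ stripIdx k, (q : ℝ) * N + α q ∈ Ioo a b

section StripLines

variable {N : ℝ} {k : ℕ} {α β : ℤ → ℝ}

lemma isAPLine_of_mem_stripLines {ℓ : Set (ℝ × ℝ)} (hℓ : ℓ ∈ stripLines N k α β) :
    IsAPLine ℓ := by
  simp only [stripLines, Finset.mem_union, Finset.mem_image] at hℓ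
  rcases hℓ with ⟨q, -, rfl⟩ | ⟨q, -, rfl⟩
  · exact Or.inl ⟨_, rfl⟩
  · exact Or.inr ⟨_, rfl⟩

lemma card_stripLines_le : (stripLines N k α β).card ≤ 6 * k := by
  classical
  calc (stripLines N k α β).card
      ≤ (stripIdx k).card + (stripIdx k).card :=
        (Finset.card_union_le _ _).trans (add_le_add Finset.card_image_le Finset.card_image_le)
    _ = 6 * k := by rw [card_stripIdx]; ring

lemma int_eq_of_add_offset_eq (hN : 0 < N) {q q' : ℤ} {a a' : ℝ} (ha : a ∈ Ioo 0 N)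
    (ha' : a' ∈ Ioo 0 N) (h : q * N + a = q' * N + a') : q = q' := by
  have h₁ : q < q' + 1 :=
    Int.cast_lt.mp (lt_of_mul_lt_mul_right (by push_cast; linarith [ha.1, ha'.2]) hN.le)
  have h₂ : q' < q + 1 :=
    Int.cast_lt.mp (lt_of_mul_lt_mul_right (by push_cast; linarith [ha.2, ha'.1]) hN.le)
  omega

lemma card_stripLines (hN : 0 < N) (hα : ∀ q ∈ stripIdx k, α q ∈ Ioo 0 N)
    (hβ : ∀ q ∈ stripIdx k, β q ∈ Ioo 0 N) : (stripLines N k α β).card = 6 * k := by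
  classical
  rw [stripLines, Finset.card_union_of_disjoint, Finset.card_image_of_injOn,
    Finset.card_image_of_injOn, card_stripIdx]
  · ring
  · exact fun q hq q' hq' h => int_eq_of_add_offset_eq hN (hβ q hq) (hβ q' hq') (hLine_injective h)
  · exact fun q hq q' hq' h => int_eq_of_add_offset_eq hN (hα q hq) (hα q' hq') (vLine_injective h)
  · simp only [Finset.disjoint_left, Finset.mem_image]
    rintro _ ⟨q, -, rfl⟩ ⟨q', -, h⟩
    exact vLine_ne_hLine _ _ h.symm

lemma exists_stripLines_inter_openSquare_iff {l x y : ℝ} (hl : 0 < l) :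
    (∃ ℓ ∈ stripLines N k α β, (ℓ ∩ openSquare l x y).Nonempty) ↔
      StripMeets N k α x (x + l) ∨ StripMeets N k β y (y + l) := by
  simp only [stripLines, Finset.mem_union, Finset.mem_image, StripMeets]
  constructor
  · rintro ⟨_, ⟨q, hq, rfl⟩ | ⟨q, hq, rfl⟩, h⟩
    · exact Or.inl ⟨q, hq, (vLine_inter_openSquare_nonempty_iff hl).1 h⟩
    · exact Or.inr ⟨q, hq, (hLine_inter_openSquare_nonempty_iff hl).1 h⟩
  · rintro (⟨q, hq, h⟩ | ⟨q, hq, h⟩)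
    · exact ⟨_, Or.inl ⟨q, hq, rfl⟩, (vLine_inter_openSquare_nonempty_iff hl).2 h⟩
    · exact ⟨_, Or.inr ⟨q, hq, rfl⟩, (hLine_inter_openSquare_nonempty_iff hl).2 h⟩

end StripLines

/-- The lines `x = 3Ni + α (3i)` and `x = 3Ni + N + α (3i+1)` of block `i` both miss the
interval `(3Ni + u, 3Ni + u + N - 1)`: block `i` selects the vertex `u`. -/
def Avoids (α : ℤ → ℝ) (i : ℕ) (u : ℝ) : Prop :=
  α (3 * i) ≤ u ∧ u ≤ α (3 * i + 1) + 1

section StripMeets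

variable {N : ℝ} {k i : ℕ} {α : ℤ → ℝ}

lemma strip_eq_or_eq_add_one (hN : 0 < N) {q a : ℤ} {x : ℝ} (hx : x ∈ Ioo 0 N)
    (h₁ : a * N ≤ q * N + x) (h₂ : q * N + x ≤ (a + 2) * N) : q = a ∨ q = a + 1 := by
  have : a < q + 1 :=
    Int.cast_lt.mp (lt_of_mul_lt_mul_right (by push_cast; linarith [hx.2]) hN.le)
  have : q < a + 2 :=
    Int.cast_lt.mp (lt_of_mul_lt_mul_right (by push_cast; linarith [hx.1]) hN.le)
  omega

lemma stripMeets_window_iff (hN : 0 < N) (hα : ∀ q ∈ stripIdx k, α q ∈ Ioo 0 N)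
    (hi : i ∈ Icc 1 k) {u : ℝ} (hu : u ∈ Icc 1 N) :
    StripMeets N k α (u + 3 * N * i) (u + 3 * N * i + (N - 1)) ↔ ¬ Avoids α i u := by
  have hA := hα (3 * i) (mem_stripIdx.2 ⟨i, hi, Or.inl rfl⟩)
  have hB := hα (3 * i + 1) (mem_stripIdx.2 ⟨i, hi, Or.inr (Or.inl rfl)⟩)
  simp only [Avoids, not_and_or, not_le]
  constructor
  · rintro ⟨q, hq, hc⟩
    rcases strip_eq_or_eq_add_one hN (hα q hq) (a := 3 * i) (by push_cast; linarith [hc.1, hu.1])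
      (by push_cast; linarith [hc.2, hu.2]) with rfl | rfl
    · push_cast at hc
      exact Or.inl (by linarith [hc.1])
    · push_cast at hc
      exact Or.inr (by linarith [hc.2])
  · rintro (h | h)
    · exact ⟨_, mem_stripIdx.2 ⟨i, hi, Or.inl rfl⟩,
        by push_cast; constructor <;> linarith [hA.2, hu.1]⟩
    · exact ⟨_, mem_stripIdx.2 ⟨i, hi, Or.inr (Or.inl rfl)⟩,
        by push_cast; constructor <;> linarith [hB.1, hu.2]⟩

lemma stripMeets_iff_offset_lt (hN : 0 < N) (hα : ∀ q ∈ stripIdx k, α q ∈ Ioo 0 N)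
    (hi : i ∈ Icc 1 k) {m : ℝ} (hm : m ∈ Icc 1 (N - 1)) :
    StripMeets N k α (m - N + 1 + 3 * N * i) (m - N + 1 + 3 * N * i + (N - 1)) ↔
      α (3 * i) < m := by
  have hmem := mem_stripIdx.2 ⟨i, hi, Or.inl rfl⟩
  constructor
  · rintro ⟨q, hq, hc⟩
    obtain ⟨j, -, hqj⟩ := mem_stripIdx.1 hq
    rcases strip_eq_or_eq_add_one hN (hα q hq) (a := 3 * i - 1)
      (by push_cast; linarith [hc.1, hm.1]) (by push_cast; linarith [hc.2, hm.2]) with h | h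
    · omega
    · obtain rfl : q = 3 * i := by omega
      push_cast at hc
      linarith [hc.2]
  · intro h
    exact ⟨_, hmem, by push_cast; constructor <;> linarith [(hα _ hmem).1, hm.2]⟩

lemma stripMeets_iff_lt_offset_succ (hN : 0 < N) (hα : ∀ q ∈ stripIdx k, α q ∈ Ioo 0 N)
    (hi : i ∈ Icc 1 k) {m : ℝ} (hm : m ∈ Icc 2 N) :
    StripMeets N k α (N + m - 1 + 3 * N * i) (N + m - 1 + 3 * N * i + (N - 1)) ↔
      m - 1 < α (3 * i + 1) := by
  have hmem := mem_stripIdx.2 ⟨i, hi, Or.inr (Or.inl rfl)⟩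
  constructor
  · rintro ⟨q, hq, hc⟩
    obtain ⟨j, -, hqj⟩ := mem_stripIdx.1 hq
    rcases strip_eq_or_eq_add_one hN (hα q hq) (a := 3 * i + 1)
      (by push_cast; linarith [hc.1, hm.1]) (by push_cast; linarith [hc.2, hm.2]) with h | h
    · subst h
      push_cast at hc
      linarith [hc.1]
    · omega
  · intro h
    exact ⟨_, hmem, by push_cast; constructor <;> linarith [(hα _ hmem).2, hm.1]⟩

lemma stripMeets_iff_lt_offset_neg (hN : 0 < N) (hα : ∀ q ∈ stripIdx k, α q ∈ Ioo 0 N)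
    (hi : i ∈ Icc 1 k) {m : ℝ} (hm : m ∈ Icc 1 (N - 1)) :
    StripMeets N k α (m + -(3 * N * i)) (m + -(3 * N * i) + (N - 1)) ↔ m < α (-(3 * i)) := by
  have hmem := mem_stripIdx.2 ⟨i, hi, Or.inr (Or.inr rfl)⟩
  constructor
  · rintro ⟨q, hq, hc⟩
    obtain ⟨j, ⟨hj, -⟩, hqj⟩ := mem_stripIdx.1 hq
    rcases strip_eq_or_eq_add_one hN (hα q hq) (a := -(3 * i))
      (by push_cast; linarith [hc.1, hm.1]) (by push_cast; linarith [hc.2, hm.2]) with h | h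
    · subst h
      push_cast at hc
      linarith [hc.1]
    · have := hi.1
      omega
  · intro h
    exact ⟨_, hmem, by push_cast; constructor <;> linarith [(hα _ hmem).2, hm.1]⟩

lemma stripMeets_iff_offset_neg_lt (hN : 0 < N) (hα : ∀ q ∈ stripIdx k, α q ∈ Ioo 0 N)
    (hi : i ∈ Icc 1 k) {m : ℝ} (hm : m ∈ Icc 2 N) :
    StripMeets N k α (m - N + -(3 * N * i)) (m - N + -(3 * N * i) + (N - 1)) ↔
      α (-(3 * i)) < m - 1 := by
  have hmem := mem_stripIdx.2 ⟨i, hi, Or.inr (Or.inr rfl)⟩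
  constructor
  · rintro ⟨q, hq, hc⟩
    obtain ⟨j, -, hqj⟩ := mem_stripIdx.1 hq
    rcases strip_eq_or_eq_add_one hN (hα q hq) (a := -(3 * i) - 1)
      (by push_cast; linarith [hc.1, hm.1]) (by push_cast; linarith [hc.2, hm.2]) with h | h
    · omega
    · obtain rfl : q = -(3 * i) := by omega
      push_cast at hc
      linarith [hc.2]
  · intro h
    exact ⟨_, hmem, by push_cast; constructor <;> linarith [(hα _ hmem).1, hm.2]⟩

lemma stripMeets_strip (hα : ∀ q ∈ stripIdx k, α q ∈ Ioo 0 N) {q : ℤ} (hq : q ∈ stripIdx k) :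
    StripMeets N k α (q * N) (q * N + N) :=
  ⟨q, hq, by constructor <;> linarith [(hα q hq).1, (hα q hq).2]⟩

end StripMeets

section SPrime

variable {n k : ℕ} {E : Set (ℕ × ℕ)} {i : ℕ}

lemma openSquare_mem_SPrime_A {j u v : ℕ} (hi : i ∈ Icc 1 k) (hj : j ∈ Icc 1 k) (hij : i ≠ j)
    (hu : u ∈ Icc 1 n) (hv : v ∈ Icc 1 n) (huv : (u, v) ∉ E) :
    openSquare (n - 1) (u + 3 * n * i) (v + 3 * n * j) ∈ SPrime n k E := by
  rw [← translateSet_openSquare, SPrime]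
  iterate 9 left
  refine mem_biUnion hi (mem_biUnion hj ?_)
  rw [if_neg hij]
  exact mem_image_of_mem _ ⟨u, v, hu.1, hu.2, hv.1, hv.2, huv, rfl⟩

lemma openSquare_mem_SPrime_D {u v : ℕ} (hi : i ∈ Icc 1 k) (hu : u ∈ Icc 1 n)
    (hv : v ∈ Icc 1 n) (huv : u ≠ v) :
    openSquare (n - 1) (u + 3 * n * i) (v + 3 * n * i) ∈ SPrime n k E := by
  rw [← translateSet_openSquare, SPrime]
  iterate 8 left
  right
  exact mem_biUnion hi (mem_image_of_mem _ ⟨u, v, hu.1, hu.2, hv.1, hv.2, huv, rfl⟩)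

lemma openSquare_mem_SPrime_Ch₁ {m : ℕ} (hi : i ∈ Icc 1 k) (hm : m ∈ Ico 1 n) :
    openSquare (n - 1) (m + -(3 * n * i)) (m - n + 1 + 3 * n * i) ∈ SPrime n k E := by
  rw [← translateSet_openSquare, SPrime]
  iterate 7 left
  right
  exact mem_biUnion hi (mem_image_of_mem _ (Or.inl ⟨m, hm.1, Nat.le_sub_one_of_lt hm.2, rfl⟩))

lemma openSquare_mem_SPrime_Ch₂ {m : ℕ} (hi : i ∈ Icc 1 k) (hm : m ∈ Icc 2 n) :
    openSquare (n - 1) (m - n + -(3 * n * i)) (n + m - 1 + 3 * n * i) ∈ SPrime n k E := by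
  rw [← translateSet_openSquare, SPrime]
  iterate 7 left
  right
  exact mem_biUnion hi (mem_image_of_mem _ (Or.inr ⟨m, hm.1, hm.2, rfl⟩))

lemma openSquare_mem_SPrime_Cv₁ {m : ℕ} (hi : i ∈ Icc 1 k) (hm : m ∈ Ico 1 n) :
    openSquare (n - 1) (m - n + 1 + 3 * n * i) (m + -(3 * n * i)) ∈ SPrime n k E := by
  rw [← translateSet_openSquare, SPrime]
  iterate 6 left
  right
  exact mem_biUnion hi (mem_image_of_mem _ (Or.inl ⟨m, hm.1, Nat.le_sub_one_of_lt hm.2, rfl⟩))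

lemma openSquare_mem_SPrime_Cv₂ {m : ℕ} (hi : i ∈ Icc 1 k) (hm : m ∈ Icc 2 n) :
    openSquare (n - 1) (n + m - 1 + 3 * n * i) (m - n + -(3 * n * i)) ∈ SPrime n k E := by
  rw [← translateSet_openSquare, SPrime]
  iterate 6 left
  right
  exact mem_biUnion hi (mem_image_of_mem _ (Or.inr ⟨m, hm.1, hm.2, rfl⟩))

lemma openSquare_mem_SPrime_Fv {q : ℤ} (hq : q ∈ stripIdx k) {j : ℕ}
    (hj : j ∈ Finset.Icc 1 (6 * k + 1)) :
    openSquare n (q * n) (-(3 * n * (k + 1)) - j * n) ∈ SPrime n k E := by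
  obtain ⟨hj₁, hj₂⟩ := Finset.mem_Icc.1 hj
  have hF : openSquare n 0 (-(j * n)) ∈ FvGadget n k := ⟨j, hj₁, hj₂, rfl⟩
  have key (a : ℝ) : openSquare n a (-(3 * n * (k + 1)) - j * n) =
      translateSet (a, -(3 * n * (k + 1))) (openSquare n 0 (-(j * n))) := by
    rw [translateSet_openSquare]
    congr 1 <;> ring
  obtain ⟨i, hi, rfl | rfl | rfl⟩ := mem_stripIdx.1 hq
  · rw [show ((3 * i : ℤ) : ℝ) * n = 3 * n * i by push_cast; ring, key, SPrime]
    iterate 3 left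
    right
    exact mem_biUnion hi (mem_image_of_mem _ hF)
  · rw [show ((3 * i + 1 : ℤ) : ℝ) * n = 3 * n * i + n by push_cast; ring, key, SPrime]
    iterate 2 left
    right
    exact mem_biUnion hi (mem_image_of_mem _ hF)
  · rw [show ((-(3 * i) : ℤ) : ℝ) * n = -(3 * n * i) by push_cast; ring, key, SPrime]
    left
    right
    exact mem_biUnion hi (mem_image_of_mem _ hF)

lemma openSquare_mem_SPrime_Fh {q : ℤ} (hq : q ∈ stripIdx k) {j : ℕ}
    (hj : j ∈ Finset.Icc 1 (6 * k + 1)) :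
    openSquare n (-(3 * n * (k + 1)) - j * n) (q * n) ∈ SPrime n k E := by
  obtain ⟨hj₁, hj₂⟩ := Finset.mem_Icc.1 hj
  have hF : openSquare n (-(j * n)) 0 ∈ FhGadget n k := ⟨j, hj₁, hj₂, rfl⟩
  have key (a : ℝ) : openSquare n (-(3 * n * (k + 1)) - j * n) a =
      translateSet (-(3 * n * (k + 1)), a) (openSquare n (-(j * n)) 0) := by
    rw [translateSet_openSquare]
    congr 1 <;> ring
  obtain ⟨i, hi, rfl | rfl | rfl⟩ := mem_stripIdx.1 hq
  · rw [show ((3 * i : ℤ) : ℝ) * n = 3 * n * i by push_cast; ring, key, SPrime]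
    iterate 5 left
    right
    exact mem_biUnion hi (mem_image_of_mem _ hF)
  · rw [show ((3 * i + 1 : ℤ) : ℝ) * n = 3 * n * i + n by push_cast; ring, key, SPrime]
    iterate 4 left
    right
    exact mem_biUnion hi (mem_image_of_mem _ hF)
  · rw [show ((-(3 * i) : ℤ) : ℝ) * n = -(3 * n * i) by push_cast; ring, key, SPrime]
    right
    exact mem_biUnion hi (mem_image_of_mem _ hF)

lemma forall_mem_SPrime {P : Set (ℝ × ℝ) → Prop}
    (hA : ∀ i ∈ Icc 1 k, ∀ j ∈ Icc 1 k, i ≠ j → ∀ u ∈ Icc 1 n, ∀ v ∈ Icc 1 n, (u, v) ∉ E →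
      P (openSquare (n - 1) (u + 3 * n * i) (v + 3 * n * j)))
    (hD : ∀ i ∈ Icc 1 k, ∀ u ∈ Icc 1 n, ∀ v ∈ Icc 1 n, u ≠ v →
      P (openSquare (n - 1) (u + 3 * n * i) (v + 3 * n * i)))
    (hCh₁ : ∀ i ∈ Icc 1 k, ∀ m ∈ Ico 1 n,
      P (openSquare (n - 1) (m + -(3 * n * i)) (m - n + 1 + 3 * n * i)))
    (hCh₂ : ∀ i ∈ Icc 1 k, ∀ m ∈ Icc 2 n,
      P (openSquare (n - 1) (m - n + -(3 * n * i)) (n + m - 1 + 3 * n * i)))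
    (hCv₁ : ∀ i ∈ Icc 1 k, ∀ m ∈ Ico 1 n,
      P (openSquare (n - 1) (m - n + 1 + 3 * n * i) (m + -(3 * n * i))))
    (hCv₂ : ∀ i ∈ Icc 1 k, ∀ m ∈ Icc 2 n,
      P (openSquare (n - 1) (n + m - 1 + 3 * n * i) (m - n + -(3 * n * i))))
    (hFv : ∀ q ∈ stripIdx k, ∀ j ∈ Finset.Icc 1 (6 * k + 1),
      P (openSquare n (q * n) (-(3 * n * (k + 1)) - j * n)))
    (hFh : ∀ q ∈ stripIdx k, ∀ j ∈ Finset.Icc 1 (6 * k + 1),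
      P (openSquare n (-(3 * n * (k + 1)) - j * n) (q * n))) :
    ∀ s ∈ SPrime n k E, P s := by
  intro s hs
  simp only [SPrime, mem_union, mem_iUnion, exists_prop] at hs
  rcases hs with ((((((((⟨i, hi, j, hj, hs⟩ | ⟨i, hi, hs⟩) | ⟨i, hi, hs⟩) | ⟨i, hi, hs⟩) |
    ⟨i, hi, hs⟩) | ⟨i, hi, hs⟩) | ⟨i, hi, hs⟩) | ⟨i, hi, hs⟩) | ⟨i, hi, hs⟩) | ⟨i, hi, hs⟩
  · split_ifs at hs with hij
    · exact absurd hs (notMem_empty _)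
    obtain ⟨_, ⟨u, v, hu₁, hu₂, hv₁, hv₂, huv, rfl⟩, rfl⟩ := hs
    rw [translateSet_openSquare]
    exact hA i hi j hj hij u ⟨hu₁, hu₂⟩ v ⟨hv₁, hv₂⟩ huv
  · obtain ⟨_, ⟨u, v, hu₁, hu₂, hv₁, hv₂, huv, rfl⟩, rfl⟩ := hs
    rw [translateSet_openSquare]
    exact hD i hi u ⟨hu₁, hu₂⟩ v ⟨hv₁, hv₂⟩ huv
  · obtain ⟨_, ⟨m, hm₁, hm₂, rfl⟩ | ⟨m, hm₁, hm₂, rfl⟩, rfl⟩ := hs <;> rw [translateSet_openSquare]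
    · exact hCh₁ i hi m ⟨hm₁, by omega⟩
    · exact hCh₂ i hi m ⟨hm₁, hm₂⟩
  · obtain ⟨_, ⟨m, hm₁, hm₂, rfl⟩ | ⟨m, hm₁, hm₂, rfl⟩, rfl⟩ := hs <;> rw [translateSet_openSquare]
    · exact hCv₁ i hi m ⟨hm₁, by omega⟩
    · exact hCv₂ i hi m ⟨hm₁, hm₂⟩
  all_goals
    obtain ⟨_, ⟨j, hj₁, hj₂, rfl⟩, rfl⟩ := hs
    rw [translateSet_openSquare]
  · convert hFh (3 * i) (mem_stripIdx.2 ⟨i, hi, Or.inl rfl⟩) j (Finset.mem_Icc.2 ⟨hj₁, hj₂⟩)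
      using 2 <;> push_cast <;> ring
  · convert hFh (3 * i + 1) (mem_stripIdx.2 ⟨i, hi, Or.inr (Or.inl rfl)⟩) j
      (Finset.mem_Icc.2 ⟨hj₁, hj₂⟩) using 2 <;> push_cast <;> ring
  · convert hFv (3 * i) (mem_stripIdx.2 ⟨i, hi, Or.inl rfl⟩) j (Finset.mem_Icc.2 ⟨hj₁, hj₂⟩)
      using 2 <;> push_cast <;> ring
  · convert hFv (3 * i + 1) (mem_stripIdx.2 ⟨i, hi, Or.inr (Or.inl rfl)⟩) j
      (Finset.mem_Icc.2 ⟨hj₁, hj₂⟩) using 2 <;> push_cast <;> ring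
  · convert hFv (-(3 * i)) (mem_stripIdx.2 ⟨i, hi, Or.inr (Or.inr rfl)⟩) j
      (Finset.mem_Icc.2 ⟨hj₁, hj₂⟩) using 2 <;> push_cast <;> ring
  · convert hFh (-(3 * i)) (mem_stripIdx.2 ⟨i, hi, Or.inr (Or.inr rfl)⟩) j
      (Finset.mem_Icc.2 ⟨hj₁, hj₂⟩) using 2 <;> push_cast <;> ring

end SPrime

lemma natCeil_mem_Icc_of_forall {N : ℕ} {lo hi c : ℝ} (hc : c ∈ Ioo 0 (N : ℝ)) (hlo : lo < N)
    (hhi : 0 < hi) (h₁ : ∀ m ∈ Ico 1 N, lo < m ∨ (m : ℝ) < c)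
    (h₂ : ∀ m ∈ Icc 2 N, (m : ℝ) - 1 < hi ∨ c < m - 1) :
    ⌈c⌉₊ ∈ Icc 1 N ∧ lo ≤ ⌈c⌉₊ ∧ (⌈c⌉₊ : ℝ) ≤ hi + 1 := by
  have hW₁ : 1 ≤ ⌈c⌉₊ := Nat.one_le_iff_ne_zero.2 (Nat.ceil_pos.2 hc.1).ne'
  have hWN : ⌈c⌉₊ ≤ N := Nat.ceil_le.2 hc.2.le
  have hcW : c ≤ ⌈c⌉₊ := Nat.le_ceil c
  have hWc : (⌈c⌉₊ : ℝ) < c + 1 := Nat.ceil_lt_add_one hc.1.le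
  refine ⟨⟨hW₁, hWN⟩, ?_, ?_⟩
  · rcases hWN.lt_or_eq with h | h
    · rcases h₁ _ ⟨hW₁, h⟩ with h' | h' <;> linarith
    · rw [h]
      exact hlo.le
  · rcases hW₁.lt_or_eq with h | h
    · rcases h₂ _ ⟨h, hWN⟩ with h' | h' <;> linarith
    · rw [← h]
      push_cast
      linarith

lemma natCast_mem_Icc_one_sub_one {m n : ℕ} (h : m ∈ Ico 1 n) :
    (m : ℝ) ∈ Icc 1 ((n : ℝ) - 1) := by
  have : (m : ℝ) + 1 ≤ n := by exact_mod_cast h.2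
  exact ⟨by exact_mod_cast h.1, by linarith⟩

section Backward

variable {n k : ℕ} {E : Set (ℕ × ℕ)} {α β : ℤ → ℝ} {i : ℕ}

lemma natCeil_avoids_of_stabs_Cv (hn : 2 ≤ n) (hα : ∀ q ∈ stripIdx k, α q ∈ Ioo 0 (n : ℝ))
    (hβ : ∀ q ∈ stripIdx k, β q ∈ Ioo 0 (n : ℝ))
    (hstab : Stabs (stripLines n k α β) (SPrime n k E)) (hi : i ∈ Icc 1 k) :
    ⌈β (-(3 * i))⌉₊ ∈ Icc 1 n ∧ Avoids α i ⌈β (-(3 * i))⌉₊ := by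
  have hN : (2 : ℝ) ≤ n := by exact_mod_cast hn
  have h₁ : ∀ m ∈ Ico 1 n, α (3 * i) < m ∨ (m : ℝ) < β (-(3 * i)) := fun m hm => by
    have hm' := natCast_mem_Icc_one_sub_one hm
    have := hstab _ (openSquare_mem_SPrime_Cv₁ hi hm)
    rwa [exists_stripLines_inter_openSquare_iff (by linarith),
      stripMeets_iff_offset_lt (by linarith) hα hi hm',
      stripMeets_iff_lt_offset_neg (by linarith) hβ hi hm'] at this
  have h₂ : ∀ m ∈ Icc 2 n, (m : ℝ) - 1 < α (3 * i + 1) ∨ β (-(3 * i)) < m - 1 := fun m hm => by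
    have hm' : (m : ℝ) ∈ Icc 2 (n : ℝ) := ⟨by exact_mod_cast hm.1, by exact_mod_cast hm.2⟩
    have := hstab _ (openSquare_mem_SPrime_Cv₂ hi hm)
    rwa [exists_stripLines_inter_openSquare_iff (by linarith),
      stripMeets_iff_lt_offset_succ (by linarith) hα hi hm',
      stripMeets_iff_offset_neg_lt (by linarith) hβ hi hm'] at this
  exact natCeil_mem_Icc_of_forall (hβ _ (mem_stripIdx.2 ⟨i, hi, Or.inr (Or.inr rfl)⟩))
    (hα _ (mem_stripIdx.2 ⟨i, hi, Or.inl rfl⟩)).2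
    (hα _ (mem_stripIdx.2 ⟨i, hi, Or.inr (Or.inl rfl)⟩)).1 h₁ h₂

lemma natCeil_avoids_of_stabs_Ch (hn : 2 ≤ n) (hα : ∀ q ∈ stripIdx k, α q ∈ Ioo 0 (n : ℝ))
    (hβ : ∀ q ∈ stripIdx k, β q ∈ Ioo 0 (n : ℝ))
    (hstab : Stabs (stripLines n k α β) (SPrime n k E)) (hi : i ∈ Icc 1 k) :
    ⌈α (-(3 * i))⌉₊ ∈ Icc 1 n ∧ Avoids β i ⌈α (-(3 * i))⌉₊ := by
  have hN : (2 : ℝ) ≤ n := by exact_mod_cast hn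
  have h₁ : ∀ m ∈ Ico 1 n, β (3 * i) < m ∨ (m : ℝ) < α (-(3 * i)) := fun m hm => by
    have hm' := natCast_mem_Icc_one_sub_one hm
    have := hstab _ (openSquare_mem_SPrime_Ch₁ hi hm)
    rw [exists_stripLines_inter_openSquare_iff (by linarith),
      stripMeets_iff_lt_offset_neg (by linarith) hα hi hm',
      stripMeets_iff_offset_lt (by linarith) hβ hi hm'] at this
    exact this.symm
  have h₂ : ∀ m ∈ Icc 2 n, (m : ℝ) - 1 < β (3 * i + 1) ∨ α (-(3 * i)) < m - 1 := fun m hm => by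
    have hm' : (m : ℝ) ∈ Icc 2 (n : ℝ) := ⟨by exact_mod_cast hm.1, by exact_mod_cast hm.2⟩
    have := hstab _ (openSquare_mem_SPrime_Ch₂ hi hm)
    rw [exists_stripLines_inter_openSquare_iff (by linarith),
      stripMeets_iff_offset_neg_lt (by linarith) hα hi hm',
      stripMeets_iff_lt_offset_succ (by linarith) hβ hi hm'] at this
    exact this.symm
  exact natCeil_mem_Icc_of_forall (hα _ (mem_stripIdx.2 ⟨i, hi, Or.inr (Or.inr rfl)⟩))
    (hβ _ (mem_stripIdx.2 ⟨i, hi, Or.inl rfl⟩)).2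
    (hβ _ (mem_stripIdx.2 ⟨i, hi, Or.inr (Or.inl rfl)⟩)).1 h₁ h₂

lemma eq_of_stabs_D (hn : 2 ≤ n) (hα : ∀ q ∈ stripIdx k, α q ∈ Ioo 0 (n : ℝ))
    (hβ : ∀ q ∈ stripIdx k, β q ∈ Ioo 0 (n : ℝ))
    (hstab : Stabs (stripLines n k α β) (SPrime n k E)) (hi : i ∈ Icc 1 k) {u v : ℕ}
    (hu : u ∈ Icc 1 n) (hv : v ∈ Icc 1 n) (hαu : Avoids α i u) (hβv : Avoids β i v) : u = v := by
  have hN : (2 : ℝ) ≤ n := by exact_mod_cast hn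
  by_contra huv
  have := hstab _ (openSquare_mem_SPrime_D hi hu hv huv)
  rw [exists_stripLines_inter_openSquare_iff (by linarith),
    stripMeets_window_iff (by linarith) hα hi ⟨by exact_mod_cast hu.1, by exact_mod_cast hu.2⟩,
    stripMeets_window_iff (by linarith) hβ hi ⟨by exact_mod_cast hv.1, by exact_mod_cast hv.2⟩]
    at this
  tauto

lemma mem_of_stabs_A (hn : 2 ≤ n) (hα : ∀ q ∈ stripIdx k, α q ∈ Ioo 0 (n : ℝ))
    (hβ : ∀ q ∈ stripIdx k, β q ∈ Ioo 0 (n : ℝ))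
    (hstab : Stabs (stripLines n k α β) (SPrime n k E)) {j : ℕ} (hi : i ∈ Icc 1 k)
    (hj : j ∈ Icc 1 k) (hij : i ≠ j) {u v : ℕ} (hu : u ∈ Icc 1 n) (hv : v ∈ Icc 1 n)
    (hαu : Avoids α i u) (hβv : Avoids β j v) : (u, v) ∈ E := by
  have hN : (2 : ℝ) ≤ n := by exact_mod_cast hn
  by_contra huv
  have := hstab _ (openSquare_mem_SPrime_A hi hj hij hu hv huv)
  rw [exists_stripLines_inter_openSquare_iff (by linarith),
    stripMeets_window_iff (by linarith) hα hi ⟨by exact_mod_cast hu.1, by exact_mod_cast hu.2⟩,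
    stripMeets_window_iff (by linarith) hβ hj ⟨by exact_mod_cast hv.1, by exact_mod_cast hv.2⟩]
    at this
  tauto

lemma exists_clique_of_stabs (hn : 2 ≤ n) (hloops : ∀ u, (u, u) ∉ E)
    (hα : ∀ q ∈ stripIdx k, α q ∈ Ioo 0 (n : ℝ)) (hβ : ∀ q ∈ stripIdx k, β q ∈ Ioo 0 (n : ℝ))
    (hstab : Stabs (stripLines n k α β) (SPrime n k E)) :
    ∃ C : Finset ℕ, C.card = k ∧ (C : Set ℕ) ⊆ Icc 1 n ∧
      ∀ u ∈ C, ∀ v ∈ C, u ≠ v → (u, v) ∈ E := by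
  set w : ℕ → ℕ := fun i => ⌈β (-(3 * i))⌉₊
  have hpick : ∀ i ∈ Icc 1 k, w i ∈ Icc 1 n ∧ Avoids α i (w i) ∧ Avoids β i (w i) := by
    intro i hi
    obtain ⟨hw, hαw⟩ := natCeil_avoids_of_stabs_Cv hn hα hβ hstab hi
    obtain ⟨hw', hβw'⟩ := natCeil_avoids_of_stabs_Ch hn hα hβ hstab hi
    rw [← eq_of_stabs_D hn hα hβ hstab hi hw hw' hαw hβw'] at hβw'
    exact ⟨hw, hαw, hβw'⟩
  have hadj : ∀ i ∈ Icc 1 k, ∀ j ∈ Icc 1 k, i ≠ j → (w i, w j) ∈ E := fun i hi j hj hij =>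
    mem_of_stabs_A hn hα hβ hstab hi hj hij (hpick i hi).1 (hpick j hj).1 (hpick i hi).2.1
      (hpick j hj).2.2
  have hinj : InjOn w (Icc 1 k) := fun i hi j hj h => by
    by_contra hij
    have := hadj i hi j hj hij
    rw [h] at this
    exact hloops _ this
  refine ⟨(Finset.Icc 1 k).image w, ?_, ?_, ?_⟩
  · rw [Finset.card_image_of_injOn (by simpa using hinj), Nat.card_Icc, add_tsub_cancel_right]
  · simp only [Finset.coe_image, Finset.coe_Icc, image_subset_iff]
    exact fun i hi => (hpick i hi).1
  · simp only [Finset.mem_image, Finset.mem_Icc]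
    rintro _ ⟨i, hi, rfl⟩ _ ⟨j, hj, rfl⟩ hij
    exact hadj i hi j hj fun h => hij (h ▸ rfl)

end Backward

lemma exists_offsets_of_stabs {n k : ℕ} {E : Set (ℕ × ℕ)} {L : Finset (Set (ℝ × ℝ))}
    (hn : 0 < n) (hL : ∀ ℓ ∈ L, IsAPLine ℓ) (hcard : L.card ≤ 6 * k)
    (hstab : Stabs L (SPrime n k E)) :
    ∃ α β : ℤ → ℝ, (∀ q ∈ stripIdx k, α q ∈ Ioo 0 (n : ℝ)) ∧
      (∀ q ∈ stripIdx k, β q ∈ Ioo 0 (n : ℝ)) ∧ L = stripLines n k α β := by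
  have hN : (0 : ℝ) < n := by exact_mod_cast hn
  have hv : ∀ q ∈ stripIdx k, ∃ a ∈ Ioo 0 (n : ℝ), vLine (q * n + a) ∈ L := fun q hq =>
    exists_vLine_mem_of_stabs_column hL hcard hN fun j hj =>
      hstab _ (openSquare_mem_SPrime_Fv hq hj)
  have hh : ∀ q ∈ stripIdx k, ∃ a ∈ Ioo 0 (n : ℝ), hLine (q * n + a) ∈ L := fun q hq =>
    exists_hLine_mem_of_stabs_row hL hcard hN fun j hj =>
      hstab _ (openSquare_mem_SPrime_Fh hq hj)
  choose! α hα hαL using hv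
  choose! β hβ hβL using hh
  refine ⟨α, β, hα, hβ, (Finset.eq_of_subset_of_card_le ?_ ?_).symm⟩
  · intro ℓ hℓ
    simp only [stripLines, Finset.mem_union, Finset.mem_image] at hℓ
    rcases hℓ with ⟨q, hq, rfl⟩ | ⟨q, hq, rfl⟩
    · exact hαL q hq
    · exact hβL q hq
  · rwa [card_stripLines hN hα hβ]

/-- `q.natAbs / 3` is the block `i` of a strip `q ∈ {3i, 3i + 1, -3i}`. -/
noncomputable def cliqueOffset (w : ℕ → ℕ) (q : ℤ) : ℝ :=
  w (q.natAbs / 3) - 1 / 2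

section Forward

variable {n k : ℕ} {E : Set (ℕ × ℕ)} {w : ℕ → ℕ}

lemma cliqueOffset_three_mul (i : ℕ) : cliqueOffset w (3 * i) = w i - 1 / 2 := by
  rw [cliqueOffset, show (3 * (i : ℤ)).natAbs / 3 = i by omega]

lemma cliqueOffset_three_mul_add_one (i : ℕ) : cliqueOffset w (3 * i + 1) = w i - 1 / 2 := by
  rw [cliqueOffset, show (3 * (i : ℤ) + 1).natAbs / 3 = i by omega]

lemma cliqueOffset_neg_three_mul (i : ℕ) : cliqueOffset w (-(3 * i)) = w i - 1 / 2 := by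
  rw [cliqueOffset, show (-(3 * (i : ℤ))).natAbs / 3 = i by omega]

lemma cliqueOffset_mem_Ioo (hw : ∀ i ∈ Icc 1 k, w i ∈ Icc 1 n) :
    ∀ q ∈ stripIdx k, cliqueOffset w q ∈ Ioo 0 (n : ℝ) := by
  intro q hq
  obtain ⟨i, hi, hqi⟩ := mem_stripIdx.1 hq
  have h₁ : (1 : ℝ) ≤ w i := by exact_mod_cast (hw i hi).1
  have h₂ : (w i : ℝ) ≤ n := by exact_mod_cast (hw i hi).2
  rw [cliqueOffset, show q.natAbs / 3 = i by omega]
  constructor <;> linarith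

lemma not_avoids_cliqueOffset {i u : ℕ} (h : u ≠ w i) : ¬ Avoids (cliqueOffset w) i u := by
  rw [Avoids, cliqueOffset_three_mul, cliqueOffset_three_mul_add_one]
  rintro ⟨h₁, h₂⟩
  rcases lt_or_gt_of_ne h with h | h
  · have : (u : ℝ) + 1 ≤ w i := by exact_mod_cast h
    linarith
  · have : (w i : ℝ) + 1 ≤ u := by exact_mod_cast h
    linarith

lemma lt_or_lt_natCast_sub_half (a : ℕ) (z : ℤ) : (z : ℝ) < a - 1 / 2 ∨ (a : ℝ) - 1 / 2 < z := by
  rcases lt_or_ge z a with h | h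
  · have : z + 1 ≤ a := h
    have : (z : ℝ) + 1 ≤ a := by exact_mod_cast this
    exact Or.inl (by linarith)
  · have : (a : ℝ) ≤ z := by exact_mod_cast h
    exact Or.inr (by linarith)

lemma stabs_SPrime_of_forall_adj (hn : 2 ≤ n) (hw : ∀ i ∈ Icc 1 k, w i ∈ Icc 1 n)
    (hadj : ∀ i ∈ Icc 1 k, ∀ j ∈ Icc 1 k, i ≠ j → (w i, w j) ∈ E) :
    Stabs (stripLines n k (cliqueOffset w) (cliqueOffset w)) (SPrime n k E) := by
  have hN : (2 : ℝ) ≤ n := by exact_mod_cast hn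
  have hα := cliqueOffset_mem_Ioo hw
  have hcast {u : ℕ} (hu : u ∈ Icc 1 n) : (u : ℝ) ∈ Icc 1 (n : ℝ) :=
    ⟨by exact_mod_cast hu.1, by exact_mod_cast hu.2⟩
  have hcast₂ {m : ℕ} (hm : m ∈ Icc 2 n) : (m : ℝ) ∈ Icc 2 (n : ℝ) :=
    ⟨by exact_mod_cast hm.1, by exact_mod_cast hm.2⟩
  refine forall_mem_SPrime ?_ ?_ ?_ ?_ ?_ ?_ ?_ ?_
  · intro i hi j hj hij u hu v hv huv
    rw [exists_stripLines_inter_openSquare_iff (by linarith),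
      stripMeets_window_iff (by linarith) hα hi (hcast hu),
      stripMeets_window_iff (by linarith) hα hj (hcast hv)]
    by_cases hui : u = w i
    · subst hui
      exact Or.inr (not_avoids_cliqueOffset fun hvj => huv (hvj ▸ hadj i hi j hj hij))
    · exact Or.inl (not_avoids_cliqueOffset hui)
  · intro i hi u hu v hv huv
    rw [exists_stripLines_inter_openSquare_iff (by linarith),
      stripMeets_window_iff (by linarith) hα hi (hcast hu),
      stripMeets_window_iff (by linarith) hα hi (hcast hv)]
    by_cases hui : u = w i
    · subst hui
      exact Or.inr (not_avoids_cliqueOffset huv.symm)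
    · exact Or.inl (not_avoids_cliqueOffset hui)
  · intro i hi m hm
    have hm' := natCast_mem_Icc_one_sub_one hm
    rw [exists_stripLines_inter_openSquare_iff (by linarith),
      stripMeets_iff_lt_offset_neg (by linarith) hα hi hm',
      stripMeets_iff_offset_lt (by linarith) hα hi hm', cliqueOffset_neg_three_mul,
      cliqueOffset_three_mul]
    exact_mod_cast lt_or_lt_natCast_sub_half (w i) m
  · intro i hi m hm
    rw [exists_stripLines_inter_openSquare_iff (by linarith),
      stripMeets_iff_offset_neg_lt (by linarith) hα hi (hcast₂ hm),
      stripMeets_iff_lt_offset_succ (by linarith) hα hi (hcast₂ hm), cliqueOffset_neg_three_mul,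
      cliqueOffset_three_mul_add_one]
    have := lt_or_lt_natCast_sub_half (w i) (m - 1)
    push_cast at this
    exact this.symm
  · intro i hi m hm
    have hm' := natCast_mem_Icc_one_sub_one hm
    rw [exists_stripLines_inter_openSquare_iff (by linarith),
      stripMeets_iff_offset_lt (by linarith) hα hi hm',
      stripMeets_iff_lt_offset_neg (by linarith) hα hi hm', cliqueOffset_neg_three_mul,
      cliqueOffset_three_mul]
    exact_mod_cast (lt_or_lt_natCast_sub_half (w i) m).symm
  · intro i hi m hm
    rw [exists_stripLines_inter_openSquare_iff (by linarith),
      stripMeets_iff_lt_offset_succ (by linarith) hα hi (hcast₂ hm),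
      stripMeets_iff_offset_neg_lt (by linarith) hα hi (hcast₂ hm), cliqueOffset_neg_three_mul,
      cliqueOffset_three_mul_add_one]
    have := lt_or_lt_natCast_sub_half (w i) (m - 1)
    push_cast at this
    exact this
  · rintro q hq j -
    rw [exists_stripLines_inter_openSquare_iff (by linarith)]
    exact Or.inl (stripMeets_strip hα hq)
  · rintro q hq j -
    rw [exists_stripLines_inter_openSquare_iff (by linarith)]
    exact Or.inr (stripMeets_strip hα hq)

end Forward

lemma exists_injOn_mapsTo_Icc_card (C : Finset ℕ) :
    ∃ w : ℕ → ℕ, InjOn w (Icc 1 C.card) ∧ MapsTo w (Icc 1 C.card) C := by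
  refine ⟨fun i => if h : i - 1 < C.card then C.orderEmbOfFin rfl ⟨i - 1, h⟩ else 0, ?_, ?_⟩
  · intro i ⟨hi₁, hi₂⟩ j ⟨hj₁, hj₂⟩ hij
    simp only [dif_pos (show i - 1 < C.card by omega), dif_pos (show j - 1 < C.card by omega)]
      at hij
    have := congrArg Fin.val ((C.orderEmbOfFin rfl).injective hij)
    simp only at this
    omega
  · intro i ⟨hi₁, hi₂⟩
    simp only [dif_pos (show i - 1 < C.card by omega)]
    exact C.orderEmbOfFin_mem rfl _

theorem sPrime_stabbable_iff_clique_general (n k : ℕ) (hn : 2 ≤ n)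
    (E : Set (ℕ × ℕ))
    (hloops : ∀ u, (u, u) ∉ E) :
    (∃ L : Finset (Set (ℝ × ℝ)), L.card ≤ 6 * k ∧ (∀ l ∈ L, IsAPLine l) ∧
      ∀ s ∈ SPrime n k E, ∃ l ∈ L, (l ∩ s).Nonempty) ↔
    (∃ C : Finset ℕ, C.card = k ∧ (C : Set ℕ) ⊆ Set.Icc 1 n ∧
      ∀ u ∈ C, ∀ v ∈ C, u ≠ v → (u, v) ∈ E) := by
  constructor
  · rintro ⟨L, hcard, hL, hstab⟩
    obtain ⟨α, β, hα, hβ, rfl⟩ := exists_offsets_of_stabs (by omega) hL hcard hstab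
    exact exists_clique_of_stabs hn hloops hα hβ hstab
  · rintro ⟨C, rfl, hCn, hC⟩
    obtain ⟨w, hw_inj, hwC⟩ := exists_injOn_mapsTo_Icc_card C
    refine ⟨_, card_stripLines_le, fun ℓ hℓ => isAPLine_of_mem_stripLines hℓ,
      stabs_SPrime_of_forall_adj hn (fun i hi => hCn (hwC hi)) fun i hi j hj hij => ?_⟩
    exact hC _ (hwC hi) _ (hwC hj) (hw_inj.ne hi hj hij)

/-- `S'(G, k)` can be stabbed by `6k` axis-parallel lines iff `G` has a `k`-clique. -/
theorem sPrime_stabbable_iff_clique (n k : ℕ) (hn : 2 ≤ n) (hk : 1 ≤ k)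
    (E : Set (ℕ × ℕ)) (hE : E ⊆ Set.Icc 1 n ×ˢ Set.Icc 1 n)
    (hloops : ∀ u, (u, u) ∉ E) :
    (∃ L : Finset (Set (ℝ × ℝ)), L.card ≤ 6 * k ∧ (∀ l ∈ L, IsAPLine l) ∧
      ∀ s ∈ SPrime n k E, ∃ l ∈ L, (l ∩ s).Nonempty) ↔
    (∃ C : Finset ℕ, C.card = k ∧ (C : Set ℕ) ⊆ Set.Icc 1 n ∧
      ∀ u ∈ C, ∀ v ∈ C, u ≠ v → (u, v) ∈ E) :=
  sPrime_stabbable_iff_clique_general n k hn E hloops
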